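/- For every natural number n ≥ 2, ∑_{k=1}^{n-2} (-1)^{k+1} (1/k) · C(n, k+2) = ∑_{k=1}^{n-2} (1/k) · C(n-k, 2), as rational numbers. -/

import Mathlib

/-!
Write `F(n, c)` for either side with `C(n, k + 2)`, resp. `C(n - k, 2)`, replaced by
`C(n, k + c)`, resp. `C(n - k, c)`. Both sides vanish at `n = 0` and satisfy Pascal's recurrence
`F(n + 1, c + 1) = F(n, c) + F(n, c + 1)`, so it suffices that they agree for `c = 0`. There both
equal the harmonic number `H_n`: since `C(n, k - 1) / k = C(n + 1, k) / (n + 1)`, Pascal's rule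
makes the left side grow by `(1 / (n + 1)) ∑ (-1)^(k+1) C(n + 1, k) = 1 / (n + 1)`.
-/

open Finset

section
variable {R : Type*}

theorem sum_Icc_neg_one_pow_succ_mul_choose [Ring R] (n : ℕ) :
    ∑ k ∈ Icc 1 (n + 1), (-1 : R) ^ (k + 1) * (n + 1).choose k = 1 := by
  have h := congrArg (Int.cast : ℤ → R)
    (Int.alternating_sum_range_choose_of_ne (n := n + 1) (by omega))
  rw [range_eq_Ico, sum_eq_sum_Ico_succ_bot (by omega), Ico_add_one_right_eq_Icc] at h
  push_cast at h
  simp only [Nat.choose_zero_right, Nat.cast_one, one_mul] at h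
  simp only [pow_succ, mul_neg_one, neg_mul, sum_neg_distrib]
  exact neg_eq_of_add_eq_zero_left h

variable [Semiring R] (a : ℕ → R) (n c : ℕ)

theorem sum_Icc_mul_choose_add_succ :
    ∑ k ∈ Icc 1 (n + 1), a k * (n + 1).choose (k + (c + 1)) =
      ∑ k ∈ Icc 1 n, a k * n.choose (k + c) + ∑ k ∈ Icc 1 n, a k * n.choose (k + (c + 1)) := by
  rw [sum_Icc_succ_top (by omega), ← sum_add_distrib]
  simp only [← add_assoc, Nat.choose_succ_succ', Nat.cast_add, mul_add]
  rw [Nat.choose_eq_zero_of_lt (by omega), Nat.choose_eq_zero_of_lt (by omega)]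
  simp

theorem sum_Icc_mul_choose_sub_succ :
    ∑ k ∈ Icc 1 (n + 1), a k * (n + 1 - k).choose (c + 1) =
      ∑ k ∈ Icc 1 n, a k * (n - k).choose c + ∑ k ∈ Icc 1 n, a k * (n - k).choose (c + 1) := by
  rw [sum_Icc_succ_top (by omega), ← sum_add_distrib]
  simp only [Nat.sub_self, Nat.choose_zero_succ, Nat.cast_zero, mul_zero, add_zero]
  refine sum_congr rfl fun k hk => ?_
  rw [show n + 1 - k = n - k + 1 by grind, Nat.choose_succ_succ', Nat.cast_add, mul_add]

end

variable {K : Type*} [Field K] [CharZero K]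

theorem one_div_mul_choose_pred (n : ℕ) {k : ℕ} (hk : 0 < k) :
    (1 / k : K) * n.choose (k - 1) = 1 / (n + 1) * (n + 1).choose k := by
  obtain ⟨j, rfl⟩ := Nat.exists_eq_add_of_lt hk
  have h : ((n + 1 : ℕ) : K) * n.choose j = (n + 1).choose (j + 1) * (j + 1 : ℕ) := by
    exact_mod_cast Nat.add_one_mul_choose_eq n j
  simp only [zero_add, Nat.add_sub_cancel]
  push_cast at h ⊢
  field_simp
  linear_combination h

theorem sum_Icc_neg_one_pow_succ_mul_one_div_mul_choose (n : ℕ) :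
    ∑ k ∈ Icc 1 n, (-1 : K) ^ (k + 1) * (1 / k) * n.choose k = ∑ k ∈ Icc 1 n, (1 / k : K) := by
  induction n with
  | zero => simp
  | succ n ih =>
    have pascal : ∀ k ∈ Icc 1 (n + 1), (-1 : K) ^ (k + 1) * (1 / k) * (n + 1).choose k =
        (-1 : K) ^ (k + 1) * (1 / k) * n.choose k +
          1 / (n + 1) * ((-1 : K) ^ (k + 1) * (n + 1).choose k) := fun k hk => by
      have hk0 := (mem_Icc.1 hk).1
      conv_lhs => rw [Nat.choose_succ_left n k hk0, Nat.cast_add]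
      linear_combination (-1 : K) ^ (k + 1) * one_div_mul_choose_pred (K := K) n hk0
    rw [sum_congr rfl pascal, sum_add_distrib, ← mul_sum, sum_Icc_neg_one_pow_succ_mul_choose,
      sum_Icc_succ_top (by omega), Nat.choose_eq_zero_of_lt (by omega), ih,
      sum_Icc_succ_top (by omega)]
    push_cast
    ring

theorem sum_Icc_neg_one_pow_succ_mul_one_div_mul_choose_add (n c : ℕ) :
    ∑ k ∈ Icc 1 n, (-1 : K) ^ (k + 1) * (1 / k) * n.choose (k + c) =
      ∑ k ∈ Icc 1 n, (1 / k : K) * (n - k).choose c := by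
  induction n generalizing c with
  | zero => simp
  | succ n ih =>
    cases c with
    | zero => simpa using sum_Icc_neg_one_pow_succ_mul_one_div_mul_choose (K := K) (n + 1)
    | succ c => rw [sum_Icc_mul_choose_add_succ, sum_Icc_mul_choose_sub_succ, ih, ih]

theorem euler_case3_general (n : ℕ) :
    ∑ k ∈ Finset.Icc 1 (n - 2), (-1 : ℚ) ^ (k + 1) * (1 / k) * (n.choose (k + 2)) =
      ∑ k ∈ Finset.Icc 1 (n - 2), (1 / k : ℚ) * ((n - k).choose 2) := by
  have hsub : Icc 1 (n - 2) ⊆ Icc 1 n := Icc_subset_Icc_right (by omega)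
  have htail {k : ℕ} (hk : k ∈ Icc 1 n) (hk' : k ∉ Icc 1 (n - 2)) : n < k + 2 := by
    simp only [mem_Icc] at hk hk'
    omega
  calc _ = ∑ k ∈ Icc 1 n, (-1 : ℚ) ^ (k + 1) * (1 / k) * n.choose (k + 2) :=
        sum_subset hsub fun k hk hk' => by
          rw [Nat.choose_eq_zero_of_lt (htail hk hk'), Nat.cast_zero, mul_zero]
    _ = ∑ k ∈ Icc 1 n, (1 / k : ℚ) * (n - k).choose 2 :=
        sum_Icc_neg_one_pow_succ_mul_one_div_mul_choose_add n 2
    _ = _ := (sum_subset hsub fun k hk hk' => by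
          rw [Nat.choose_eq_zero_of_lt (by have := htail hk hk'; omega), Nat.cast_zero,
            mul_zero]).symm

theorem euler_case3 (n : ℕ) (hn : 2 ≤ n) :
    ∑ k ∈ Finset.Icc 1 (n - 2), (-1 : ℚ) ^ (k + 1) * (1 / k) * (n.choose (k + 2)) =
      ∑ k ∈ Finset.Icc 1 (n - 2), (1 / k : ℚ) * ((n - k).choose 2) :=
  euler_case3_general n
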